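/- Let (x_i)_{i∈Λ} be a finite strictly increasing family of reals in an interval J = [A, B] with A > 0, and suppose there is α > 0 such that x_{i+1} − x_{i−1} ≥ α·x_i whenever x_{i−1}, x_{i+1} ∈ J. Let J^k = [σ^k A, σ^{k+1} A] for 0 ≤ k < N be a geometric partition of J (σ^N A = B, σ > 1). Then the number of indices i with (x_{i−1}, x_{i+1}) ⊆ J^k is at most 2(σ−1)/α, and hence the total number of indices i with x_i ∈ J is at most 2N(σ−1)/α + 2N. -/

import Mathlib

/-!
Inside a cell `[c, σ c]` every gap `x (i + 1) - x (i - 1)` is at least `α c`, and it splits into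
the half-gaps `x (i + 1) - x i` and `x i - x (i - 1)`. Each of the two families of half-gaps is a
family of disjoint intervals inside the cell, so `|S| α c ≤ 2 (σ - 1) c`. An index `i` with `x i`
in a cell either has `(x (i - 1), x (i + 1))` inside the cell or straddles one of the two
endpoints of the cell, and each endpoint is straddled, in the half-open sense, by one index at
most.
-/

open Finset MeasureTheory

theorem sum_sub_le_of_pairwiseDisjoint_Ioc {ι : Type*} {s : Finset ι} {a b : ι → ℝ} {c d : ℝ}
    (hcd : c ≤ d) (hab : ∀ i ∈ s, a i ≤ b i)
    (hdisj : (s : Set ι).PairwiseDisjoint fun i => Set.Ioc (a i) (b i))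
    (hsub : ∀ i ∈ s, Set.Ioc (a i) (b i) ⊆ Set.Icc c d) :
    ∑ i ∈ s, (b i - a i) ≤ d - c := by
  rw [← ENNReal.ofReal_le_ofReal_iff (sub_nonneg.2 hcd)]
  calc ENNReal.ofReal (∑ i ∈ s, (b i - a i)) = ∑ i ∈ s, volume (Set.Ioc (a i) (b i)) := by
        rw [ENNReal.ofReal_sum_of_nonneg fun i hi => sub_nonneg.2 (hab i hi)]
        simp only [Real.volume_Ioc]
    _ = volume (⋃ i ∈ s, Set.Ioc (a i) (b i)) :=
      (measure_biUnion_finset hdisj fun _ _ => measurableSet_Ioc).symm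
    _ ≤ volume (Set.Icc c d) := measure_mono (Set.iUnion₂_subset hsub)
    _ = ENNReal.ofReal (d - c) := Real.volume_Icc

theorem sum_add_one_sub_le_of_monotone {x : ℤ → ℝ} (hx : Monotone x) {S : Finset ℤ} {c d : ℝ}
    (hcd : c ≤ d) (hS : ∀ i ∈ S, c ≤ x i ∧ x (i + 1) ≤ d) : ∑ i ∈ S, (x (i + 1) - x i) ≤ d - c := by
  refine sum_sub_le_of_pairwiseDisjoint_Ioc hcd (fun i _ => hx (by omega)) ?_
    fun i hi => Set.Ioc_subset_Icc_self.trans (Set.Icc_subset_Icc (hS i hi).1 (hS i hi).2)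
  have := hx.pairwise_disjoint_on_Ioc_succ.set_pairwise (S : Set ℤ)
  simp only [Order.succ_eq_add_one] at this
  exact this

theorem le_and_le_of_Ioo_subset_Icc {α : Type*} [LinearOrder α] [TopologicalSpace α]
    [OrderTopology α] [DenselyOrdered α] {a b c d : α} (hab : a < b)
    (h : Set.Ioo a b ⊆ Set.Icc c d) : c ≤ a ∧ b ≤ d :=
  (Set.Icc_subset_Icc_iff hab.le).1 (closure_Ioo hab.ne ▸ closure_minimal h isClosed_Icc)

theorem card_mul_le_two_mul_of_le_sub {x : ℤ → ℝ} (hx : Monotone x) {S : Finset ℤ} {c d g : ℝ}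
    (hcd : c ≤ d) (hS : ∀ i ∈ S, c ≤ x (i - 1) ∧ x (i + 1) ≤ d)
    (hg : ∀ i ∈ S, g ≤ x (i + 1) - x (i - 1)) : S.card * g ≤ 2 * (d - c) := by
  have right : ∑ i ∈ S, (x (i + 1) - x i) ≤ d - c :=
    sum_add_one_sub_le_of_monotone hx hcd fun i hi =>
      ⟨(hS i hi).1.trans (hx (by omega)), (hS i hi).2⟩
  have left : ∑ i ∈ S, (x (i + 1 - 1) - x (i - 1)) ≤ d - c :=
    sum_add_one_sub_le_of_monotone (x := fun i => x (i - 1)) (fun _ _ h => hx (by omega)) hcd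
      fun i hi => ⟨(hS i hi).1, (hx (by omega)).trans (hS i hi).2⟩
  simp only [add_sub_cancel_right] at left
  calc S.card * g = ∑ i ∈ S, g := by rw [sum_const, nsmul_eq_mul]
    _ ≤ ∑ i ∈ S, (x (i + 1) - x (i - 1)) := sum_le_sum hg
    _ = ∑ i ∈ S, (x (i + 1) - x i) + ∑ i ∈ S, (x i - x (i - 1)) := by
      rw [← sum_add_distrib]; exact sum_congr rfl fun _ _ => by ring
    _ ≤ 2 * (d - c) := by linarith

theorem card_le_of_Ioo_subset_Icc_mul {x : ℤ → ℝ} (hx : StrictMono x) {α σ c : ℝ} (hα : 0 < α)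
    (hσ : 1 ≤ σ) (hc : 0 < c) {S : Finset ℤ}
    (hS : ∀ i ∈ S, Set.Ioo (x (i - 1)) (x (i + 1)) ⊆ Set.Icc c (σ * c))
    (hgap : ∀ i ∈ S, α * x i ≤ x (i + 1) - x (i - 1)) : (S.card : ℝ) ≤ 2 * (σ - 1) / α := by
  have hends : ∀ i ∈ S, c ≤ x (i - 1) ∧ x (i + 1) ≤ σ * c :=
    fun i hi => le_and_le_of_Ioo_subset_Icc (hx (by omega)) (hS i hi)
  have hcell_gap : ∀ i ∈ S, α * c ≤ x (i + 1) - x (i - 1) := fun i hi =>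
    (mul_le_mul_of_nonneg_left ((hends i hi).1.trans (hx (by omega)).le) hα.le).trans (hgap i hi)
  have hsum := card_mul_le_two_mul_of_le_sub hx.monotone (le_mul_of_one_le_left hc.le hσ) hends
    hcell_gap
  rw [le_div_iff₀ hα]
  exact le_of_mul_le_mul_right (by linarith) hc

theorem card_filter_lt_le_le_one {x : ℤ → ℝ} (hx : Monotone x) (S : Finset ℤ) (p : ℝ) :
    (S.filter fun i => x (i - 1) < p ∧ p ≤ x i).card ≤ 1 := by
  refine card_le_one.2 fun i hi j hj => ?_
  simp only [mem_filter] at hi hj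
  by_contra hne
  rcases lt_or_gt_of_ne hne with h | h
  · exact (hi.2.2.trans_lt' ((hx (by omega)).trans_lt hj.2.1)).false
  · exact (hj.2.2.trans_lt' ((hx (by omega)).trans_lt hi.2.1)).false

theorem card_filter_le_lt_le_one {x : ℤ → ℝ} (hx : Monotone x) (S : Finset ℤ) (p : ℝ) :
    (S.filter fun i => x i ≤ p ∧ p < x (i + 1)).card ≤ 1 := by
  refine card_le_one.2 fun i hi j hj => ?_
  simp only [mem_filter] at hi hj
  by_contra hne
  rcases lt_or_gt_of_ne hne with h | h
  · exact (hj.2.1.trans_lt' (hi.2.2.trans_le (hx (by omega)))).false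
  · exact (hi.2.1.trans_lt' (hj.2.2.trans_le (hx (by omega)))).false

open Classical in
theorem card_filter_mem_Icc_le {x : ℤ → ℝ} (hx : Monotone x) (Λ : Finset ℤ) (c d : ℝ) :
    (Λ.filter fun i => x i ∈ Set.Icc c d).card ≤
      (Λ.filter fun i => Set.Ioo (x (i - 1)) (x (i + 1)) ⊆ Set.Icc c d).card + 2 := by
  set inside := Λ.filter fun i => Set.Ioo (x (i - 1)) (x (i + 1)) ⊆ Set.Icc c d
  set enters := Λ.filter fun i => x (i - 1) < c ∧ c ≤ x i
  set leaves := Λ.filter fun i => x i ≤ d ∧ d < x (i + 1)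
  have hcover : (Λ.filter fun i => x i ∈ Set.Icc c d) ⊆ inside ∪ enters ∪ leaves := by
    intro i hi
    obtain ⟨hiΛ, hci, hid⟩ := mem_filter.1 hi
    simp only [inside, enters, leaves, Finset.mem_union, mem_filter, hiΛ, hci, hid, true_and,
      and_true]
    by_cases h1 : x (i - 1) < c
    · exact Or.inl (Or.inr h1)
    by_cases h2 : d < x (i + 1)
    · exact Or.inr h2
    exact Or.inl (Or.inl (Set.Ioo_subset_Icc_self.trans
      (Set.Icc_subset_Icc (not_lt.1 h1) (not_lt.1 h2))))
  have := Finset.card_le_card hcover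
  have := card_union_le (inside ∪ enters) leaves
  have := card_union_le inside enters
  have : enters.card ≤ 1 := card_filter_lt_le_le_one hx Λ c
  have : leaves.card ≤ 1 := card_filter_le_lt_le_one hx Λ d
  omega

theorem exists_lt_mem_Icc_succ {α : Type*} [LinearOrder α] (a : ℕ → α) {N : ℕ} (hN : 0 < N)
    {y : α} (hy : y ∈ Set.Icc (a 0) (a N)) : ∃ k < N, y ∈ Set.Icc (a k) (a (k + 1)) := by
  induction N, hN using Nat.le_induction with
  | base => exact ⟨0, zero_lt_one, hy⟩
  | succ n hn ih =>
    rcases le_total y (a n) with h | h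
    · obtain ⟨k, hk, hyk⟩ := ih ⟨hy.1, h⟩
      exact ⟨k, by omega, hyk⟩
    · exact ⟨n, by omega, h, hy.2⟩

theorem card_le_of_Ioo_subset_geometric_cell {x : ℤ → ℝ} (hx : StrictMono x) {A α σ : ℝ}
    {N k : ℕ} (hA : 0 < A) (hα : 0 < α) (hσ : 1 < σ) (hk : k < N)
    (hgap : ∀ i : ℤ, x (i - 1) ∈ Set.Icc A (σ ^ N * A) → x (i + 1) ∈ Set.Icc A (σ ^ N * A) →
      α * x i ≤ x (i + 1) - x (i - 1))
    {S : Finset ℤ}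
    (hS : ∀ i ∈ S, Set.Ioo (x (i - 1)) (x (i + 1)) ⊆ Set.Icc (σ ^ k * A) (σ ^ (k + 1) * A)) :
    (S.card : ℝ) ≤ 2 * (σ - 1) / α := by
  have hAc : A ≤ σ ^ k * A := le_mul_of_one_le_left hA.le (one_le_pow₀ hσ.le)
  have hdB : σ ^ (k + 1) * A ≤ σ ^ N * A :=
    mul_le_mul_of_nonneg_right (pow_le_pow_right₀ hσ.le hk) hA.le
  rw [pow_succ', mul_assoc] at hS hdB
  refine card_le_of_Ioo_subset_Icc_mul hx hα hσ.le (by positivity) hS fun i hi => ?_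
  obtain ⟨h1, h2⟩ := le_and_le_of_Ioo_subset_Icc (hx (by omega)) (hS i hi)
  exact hgap i ⟨hAc.trans h1, ((hx (by omega)).le.trans h2).trans hdB⟩
    ⟨hAc.trans (h1.trans (hx (by omega)).le), h2.trans hdB⟩

/-- Counting lemma: for a strictly increasing sequence in `J = [A,B]` with gaps
`x_{i+1} − x_{i−1} ≥ α x_i`, each cell `J^k = [σ^k A, σ^{k+1} A]` of the geometric
partition captures at most `2(σ−1)/α` indices, and the total number of indices with
`x_i ∈ J` is at most `2N(σ−1)/α + 2N`. -/
theorem stmt9 (x : ℤ → ℝ) (hmono : StrictMono x) (A B α σ : ℝ) (N : ℕ)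
    (hA : 0 < A) (hα : 0 < α) (hσ : 1 < σ) (hN : 1 ≤ N) (hB : σ ^ N * A = B)
    (hgap : ∀ i : ℤ, x (i - 1) ∈ Set.Icc A B → x (i + 1) ∈ Set.Icc A B →
      α * x i ≤ x (i + 1) - x (i - 1)) :
    (∀ k < N, ∀ S : Finset ℤ,
      (∀ i ∈ S, Set.Ioo (x (i - 1)) (x (i + 1)) ⊆ Set.Icc (σ ^ k * A) (σ ^ (k + 1) * A)) →
      (S.card : ℝ) ≤ 2 * (σ - 1) / α) ∧
    (∀ Λ : Finset ℤ, (∀ i ∈ Λ, x i ∈ Set.Icc A B) →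
      (Λ.card : ℝ) ≤ 2 * (N : ℝ) * (σ - 1) / α + 2 * (N : ℝ)) := by
  classical
  subst hB
  refine ⟨fun k hk S hS => card_le_of_Ioo_subset_geometric_cell hmono hA hα hσ hk hgap hS,
    fun Λ hΛ => ?_⟩
  set cell : ℕ → Finset ℤ := fun k =>
    Λ.filter fun i => x i ∈ Set.Icc (σ ^ k * A) (σ ^ (k + 1) * A)
  have hcell : ∀ k < N, ((cell k).card : ℝ) ≤ 2 * (σ - 1) / α + 2 := fun k hk => by
    have hsplit : ((cell k).card : ℝ) ≤ _ :=
      Nat.cast_le.2 (card_filter_mem_Icc_le hmono.monotone Λ _ _)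
    have hinside := card_le_of_Ioo_subset_geometric_cell hmono hA hα hσ hk hgap
      (S := Λ.filter fun i =>
        Set.Ioo (x (i - 1)) (x (i + 1)) ⊆ Set.Icc (σ ^ k * A) (σ ^ (k + 1) * A))
      fun i hi => (mem_filter.1 hi).2
    push_cast at hsplit
    linarith
  have hcover : Λ ⊆ (range N).biUnion cell := fun i hi => by
    obtain ⟨k, hk, hik⟩ :=
      exists_lt_mem_Icc_succ (fun k => σ ^ k * A) hN (by simpa using hΛ i hi)
    exact mem_biUnion.2 ⟨k, mem_range.2 hk, mem_filter.2 ⟨hi, hik⟩⟩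
  calc (Λ.card : ℝ) ≤ ∑ k ∈ range N, ((cell k).card : ℝ) := by
        exact_mod_cast (Finset.card_le_card hcover).trans card_biUnion_le
    _ ≤ ∑ k ∈ range N, (2 * (σ - 1) / α + 2) := sum_le_sum fun k hk => hcell k (mem_range.1 hk)
    _ = 2 * N * (σ - 1) / α + 2 * N := by rw [sum_const, card_range, nsmul_eq_mul]; ring
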